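/- Assume w is quasi-definite. Then for every n ≥ 1: H^R_n·(H^R_{n−1})^{−1} = I − (α^R_{2,n})†·α^L_{1,n} and H^L_n·(H^L_{n−1})^{−1} = I − α^L_{1,n}·(α^R_{2,n})†; consequently the matrices I − (α^R_{2,n})†·α^L_{1,n} and I − α^L_{1,n}·(α^R_{2,n})† are invertible. -/

import Mathlib

open Complex Matrix

noncomputable section

/-- Normalized matrix-valued integral over the unit circle:
`∮ f(ζ) dm(ζ) := (2π)⁻¹ ∫₀^{2π} f(e^{iθ}) dθ`, taken entrywise. -/
def circInt (N : ℕ) (f : ℂ → Matrix (Fin N) (Fin N) ℂ) : Matrix (Fin N) (Fin N) ℂ :=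
  Matrix.of fun i j =>
    (2 * Real.pi)⁻¹ • ∫ θ in (0:ℝ)..(2 * Real.pi), f (Complex.exp (θ * Complex.I)) i j

/-- Evaluation at `z` of the matrix polynomial with coefficients `c 0, …, c n`. -/
def mPolyEval {N : ℕ} (c : ℕ → Matrix (Fin N) (Fin N) ℂ) (n : ℕ) (z : ℂ) :
    Matrix (Fin N) (Fin N) ℂ :=
  ∑ k ∈ Finset.range (n + 1), z ^ k • c k

/-- Evaluation at `z` of the reciprocal polynomial `P̃(z) = ∑_{k=0}^n (c (n-k))ᴴ z^k`. -/
def mRecipEval {N : ℕ} (c : ℕ → Matrix (Fin N) (Fin N) ℂ) (n : ℕ) (z : ℂ) :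
    Matrix (Fin N) (Fin N) ℂ :=
  ∑ k ∈ Finset.range (n + 1), z ^ k • (c (n - k))ᴴ

/-- The `j`-th moment `μ̂ j = ∮ w(ζ) ζ^{-j} dm(ζ)` of the matrix weight `w`. -/
def mMoment (N : ℕ) (w : ℂ → Matrix (Fin N) (Fin N) ℂ) (j : ℤ) : Matrix (Fin N) (Fin N) ℂ :=
  circInt N fun ζ => ζ ^ (-j) • w ζ

/-- Quasi-definiteness: all the truncated block Toeplitz moment matrices
`M^L_[n]` and `M^R_[n]` are invertible. -/
def QuasiDef (N : ℕ) (w : ℂ → Matrix (Fin N) (Fin N) ℂ) : Prop :=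
  ∀ n : ℕ, 1 ≤ n →
    IsUnit (Matrix.of fun p q : Fin n × Fin N =>
      mMoment N w ((p.1 : ℤ) - (q.1 : ℤ)) p.2 q.2) ∧
    IsUnit (Matrix.of fun p q : Fin n × Fin N =>
      mMoment N w ((q.1 : ℤ) - (p.1 : ℤ)) p.2 q.2)

/-- `P n` lists the coefficients of the monic degree-`n` Szegő polynomial `P^L_{1,n}`:
monicity together with `∮ P^L_{1,n}(ζ) w(ζ) ζ^{-j} dm(ζ) = 0` for `j = 0,…,n-1`. -/
def IsSzPL1 (N : ℕ) (w : ℂ → Matrix (Fin N) (Fin N) ℂ)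
    (P : ℕ → ℕ → Matrix (Fin N) (Fin N) ℂ) : Prop :=
  ∀ n : ℕ, P n n = 1 ∧ (∀ k, n < k → P n k = 0) ∧
    ∀ j < n, circInt N (fun ζ => ζ ^ (-(j : ℤ)) • (mPolyEval (P n) n ζ * w ζ)) = 0

/-- `P n` lists the coefficients of the monic degree-`n` Szegő polynomial `P^R_{1,n}`:
monicity together with `∮ ζ^{-j} w(ζ) P^R_{1,n}(ζ) dm(ζ) = 0` for `j = 0,…,n-1`. -/
def IsSzPR1 (N : ℕ) (w : ℂ → Matrix (Fin N) (Fin N) ℂ)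
    (P : ℕ → ℕ → Matrix (Fin N) (Fin N) ℂ) : Prop :=
  ∀ n : ℕ, P n n = 1 ∧ (∀ k, n < k → P n k = 0) ∧
    ∀ j < n, circInt N (fun ζ => ζ ^ (-(j : ℤ)) • (w ζ * mPolyEval (P n) n ζ)) = 0

/-- `P n` lists the coefficients of the monic degree-`n` Szegő polynomial `P^L_{2,n}`:
monicity together with `∮ ζ^{j} w(ζ) (P^L_{2,n}(ζ))† dm(ζ) = 0` for `j = 0,…,n-1`. -/
def IsSzPL2 (N : ℕ) (w : ℂ → Matrix (Fin N) (Fin N) ℂ)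
    (P : ℕ → ℕ → Matrix (Fin N) (Fin N) ℂ) : Prop :=
  ∀ n : ℕ, P n n = 1 ∧ (∀ k, n < k → P n k = 0) ∧
    ∀ j < n, circInt N (fun ζ => ζ ^ j • (w ζ * (mPolyEval (P n) n ζ)ᴴ)) = 0

/-- `P n` lists the coefficients of the monic degree-`n` Szegő polynomial `P^R_{2,n}`:
monicity together with `∮ (P^R_{2,n}(ζ))† w(ζ) ζ^{j} dm(ζ) = 0` for `j = 0,…,n-1`. -/
def IsSzPR2 (N : ℕ) (w : ℂ → Matrix (Fin N) (Fin N) ℂ)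
    (P : ℕ → ℕ → Matrix (Fin N) (Fin N) ℂ) : Prop :=
  ∀ n : ℕ, P n n = 1 ∧ (∀ k, n < k → P n k = 0) ∧
    ∀ j < n, circInt N (fun ζ => ζ ^ j • ((mPolyEval (P n) n ζ)ᴴ * w ζ)) = 0

/-- The Verblunsky matrix of the family `P`: the value at `0` of its `n`-th member. -/
def szVer {N : ℕ} (P : ℕ → ℕ → Matrix (Fin N) (Fin N) ℂ) (n : ℕ) :
    Matrix (Fin N) (Fin N) ℂ :=
  mPolyEval (P n) n 0

/-- Quasi-tau matrix `H^L_n = ∮ P^L_{1,n}(ζ) w(ζ) ζ^{-n} dm(ζ)` (from the family `P^L_{1,·}`). -/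
def szHL (N : ℕ) (w : ℂ → Matrix (Fin N) (Fin N) ℂ)
    (P : ℕ → ℕ → Matrix (Fin N) (Fin N) ℂ) (n : ℕ) : Matrix (Fin N) (Fin N) ℂ :=
  circInt N fun ζ => ζ ^ (-(n : ℤ)) • (mPolyEval (P n) n ζ * w ζ)

/-- Quasi-tau matrix `H^R_n = ∮ ζ^{-n} w(ζ) P^R_{1,n}(ζ) dm(ζ)` (from the family `P^R_{1,·}`). -/
def szHR (N : ℕ) (w : ℂ → Matrix (Fin N) (Fin N) ℂ)
    (P : ℕ → ℕ → Matrix (Fin N) (Fin N) ℂ) (n : ℕ) : Matrix (Fin N) (Fin N) ℂ :=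
  circInt N fun ζ => ζ ^ (-(n : ℤ)) • (w ζ * mPolyEval (P n) n ζ)

/-- Cauchy transform `Q^L_{1,n}(z) = ∮ ζ^{-n} P^L_{1,n}(ζ) w(ζ) (1-ζ^{-1}z)^{-1} dm(ζ)`. -/
def szQL1 (N : ℕ) (w : ℂ → Matrix (Fin N) (Fin N) ℂ)
    (P : ℕ → ℕ → Matrix (Fin N) (Fin N) ℂ) (n : ℕ) (z : ℂ) : Matrix (Fin N) (Fin N) ℂ :=
  circInt N fun ζ => (ζ ^ (-(n : ℤ)) * (1 - ζ⁻¹ * z)⁻¹) • (mPolyEval (P n) n ζ * w ζ)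

/-- Cauchy transform `Q^R_{2,n}(z) = ∮ ζ^{-(n+1)} P̃^R_{2,n}(ζ) w(ζ) (1-ζ^{-1}z)^{-1} dm(ζ)`. -/
def szQR2 (N : ℕ) (w : ℂ → Matrix (Fin N) (Fin N) ℂ)
    (P : ℕ → ℕ → Matrix (Fin N) (Fin N) ℂ) (n : ℕ) (z : ℂ) : Matrix (Fin N) (Fin N) ℂ :=
  circInt N fun ζ => (ζ ^ (-((n : ℤ) + 1)) * (1 - ζ⁻¹ * z)⁻¹) • (mRecipEval (P n) n ζ * w ζ)

/-!
Everything reduces to the moment sequence `μ j = ∮ w(ζ) ζ^{-j} dm(ζ)`: a matrix polynomial `a` pairs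
with `w` to `∑ₖ aₖ μ(j - k)`, and right orthogonality against `μ` is left orthogonality against the
reflected sequence `j ↦ μ(-j)`. Invertibility of the block Toeplitz matrices makes a monic
orthogonal polynomial unique, which gives the Szegő recurrence
`P^L_{1,m+1}(z) = z P^L_{1,m}(z) + α^L_{1,m+1} P̃^R_{2,m}(z)` and its mirror image for
`(P^R_{2,m+1})†`. Pairing the first with `ζ^{-(m+1)}` and the second with `1` yields
`H^L_{m+1} = (I - α^L_{1,m+1} (α^R_{2,m+1})†) H^L_m`, and `H^L_m` is invertible because the last
block of `M^R_[m+1]⁻¹` is a right inverse of it. Since `H^R_m = ∑ₖ (P^R_{2,m})ₖ† μ(k - m)` by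
biorthogonality of `P^R_{1,m}` and `P^R_{2,m}`, the statement for `H^R` is the same computation for
the reflected moment sequence.
-/

open Finset

namespace Szego

section Ring

variable {A : Type*}

def reflect (μ : ℤ → A) (j : ℤ) : A := μ (-j)

@[simp] lemma reflect_reflect (μ : ℤ → A) : reflect (reflect μ) = μ :=
  funext fun j => by simp [reflect]

variable [Ring A]

def polyMoment (μ : ℤ → A) (a : ℕ → A) (n : ℕ) (j : ℤ) : A :=
  ∑ k ∈ range (n + 1), a k * μ (j - k)

def IsMonicOrtho (μ : ℤ → A) (a : ℕ → A) (n : ℕ) : Prop :=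
  a n = 1 ∧ ∀ j < n, polyMoment μ a n j = 0

def coeffShift (u : ℕ → A) : ℕ → A
  | 0 => 0
  | k + 1 => u k

def coeffRev (m : ℕ) (u : ℕ → A) (k : ℕ) : A := if k ≤ m then u (m - k) else 0

variable {μ : ℤ → A}

lemma polyMoment_congr {a b : ℕ → A} {n : ℕ} (h : ∀ k ≤ n, a k = b k) (j : ℤ) :
    polyMoment μ a n j = polyMoment μ b n j :=
  sum_congr rfl fun k hk => by rw [h k (Nat.lt_succ_iff.mp (mem_range.mp hk))]

lemma polyMoment_add (a b : ℕ → A) (n : ℕ) (j : ℤ) :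
    polyMoment μ (fun k => a k + b k) n j = polyMoment μ a n j + polyMoment μ b n j := by
  simp only [polyMoment, add_mul, sum_add_distrib]

lemma polyMoment_sub (a b : ℕ → A) (n : ℕ) (j : ℤ) :
    polyMoment μ (fun k => a k - b k) n j = polyMoment μ a n j - polyMoment μ b n j := by
  simp only [polyMoment, sub_mul, sum_sub_distrib]

lemma polyMoment_const_mul (B : A) (a : ℕ → A) (n : ℕ) (j : ℤ) :
    polyMoment μ (fun k => B * a k) n j = B * polyMoment μ a n j := by
  simp only [polyMoment, mul_sum, mul_assoc]

lemma polyMoment_coeffShift (u : ℕ → A) (m : ℕ) (j : ℤ) :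
    polyMoment μ (coeffShift u) (m + 1) j = polyMoment μ u m (j - 1) := by
  rw [polyMoment, sum_range_succ']
  simp only [coeffShift, zero_mul, add_zero, polyMoment]
  refine sum_congr rfl fun k _ => ?_
  congr 2
  push_cast
  ring

lemma polyMoment_coeffRev (v : ℕ → A) (m : ℕ) (j : ℤ) :
    polyMoment μ (coeffRev m v) (m + 1) j = polyMoment (reflect μ) v m (m - j) := by
  rw [polyMoment, sum_range_succ, ← sum_range_reflect, polyMoment]
  simp only [coeffRev, reflect, if_neg (Nat.not_succ_le_self m), zero_mul, add_zero]
  refine sum_congr rfl fun k hk => ?_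
  have hk : k ≤ m := Nat.lt_succ_iff.mp (mem_range.mp hk)
  rw [if_pos (by omega), show m - (m + 1 - 1 - k) = k by omega]
  congr 2
  push_cast [show m + 1 - 1 - k = m - k by omega, hk]
  ring

lemma sum_moment_mul_eq_polyMoment_reflect {b d : ℕ → A} {n : ℕ} (hb : b n = 1)
    (hb_orth : ∀ j < n, ∑ k ∈ range (n + 1), μ (j - k) * b k = 0)
    (hd : IsMonicOrtho (reflect μ) d n) :
    ∑ k ∈ range (n + 1), μ (n - k) * b k = polyMoment (reflect μ) d n n := by
  have hrows : ∑ j ∈ range (n + 1), d j * ∑ k ∈ range (n + 1), μ (j - k) * b k =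
      ∑ k ∈ range (n + 1), μ (n - k) * b k := by
    rw [sum_eq_single_of_mem n (self_mem_range_succ n), hd.1, one_mul]
    intro j hj hjn
    rw [hb_orth j (by have := mem_range.mp hj; omega), mul_zero]
  have hcols : ∑ k ∈ range (n + 1), polyMoment (reflect μ) d n k * b k =
      polyMoment (reflect μ) d n n := by
    rw [sum_eq_single_of_mem n (self_mem_range_succ n), hb, mul_one]
    intro k hk hkn
    rw [hd.2 k (by have := mem_range.mp hk; omega), zero_mul]
  simp only [polyMoment, reflect, neg_sub, sum_mul, mul_sum, mul_assoc] at hrows hcols ⊢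
  rw [← hrows, ← hcols, sum_comm]

end Ring

section Matrix

variable {ι R : Type*}

def blockToeplitz (μ : ℤ → Matrix ι ι R) (n : ℕ) : Matrix (Fin n × ι) (Fin n × ι) R :=
  Matrix.of fun p q => μ (q.1 - p.1) p.2 q.2

def blockRow (a : ℕ → Matrix ι ι R) (n : ℕ) : Matrix ι (Fin n × ι) R :=
  Matrix.of fun i p => a p.1 i p.2

lemma blockRow_congr {a b : ℕ → Matrix ι ι R} {n : ℕ} (h : ∀ k < n, a k = b k) :
    blockRow a n = blockRow b n := by
  ext i ⟨k, q⟩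
  simp only [blockRow, of_apply, h k k.isLt]

variable [CommRing R] [Fintype ι] {μ : ℤ → Matrix ι ι R}

lemma blockRow_mul_blockToeplitz (a : ℕ → Matrix ι ι R) (n : ℕ) :
    blockRow a n * blockToeplitz μ n =
      blockRow (fun j => ∑ k ∈ range n, a k * μ (j - k)) n := by
  ext i ⟨j, q⟩
  simp only [blockRow, blockToeplitz, mul_apply, of_apply, Fintype.sum_prod_type, Matrix.sum_apply]
  exact Fin.sum_univ_eq_sum_range (fun k => ∑ p, a k i p * μ (j - k) p q) n

lemma mul_blockRow (B : Matrix ι ι R) (a : ℕ → Matrix ι ι R) (n : ℕ) :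
    B * blockRow a n = blockRow (fun k => B * a k) n := by
  ext i ⟨k, q⟩
  simp only [blockRow, mul_apply, of_apply]

variable [DecidableEq ι]

lemma eq_zero_of_sum_mul_eq_zero {n : ℕ} (hμ : IsUnit (blockToeplitz μ n)) {e : ℕ → Matrix ι ι R}
    (he : ∀ j < n, ∑ k ∈ range n, e k * μ (j - k) = 0) : ∀ k < n, e k = 0 := by
  have hrow : blockRow e n * blockToeplitz μ n =
      (0 : Matrix ι (Fin n × ι) R) * blockToeplitz μ n := by
    rw [blockRow_mul_blockToeplitz, Matrix.zero_mul]
    ext i ⟨j, q⟩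
    simp [blockRow, he j j.isLt]
  let := hμ.invertible
  have hzero := mul_left_injective_of_invertible _ hrow
  intro k hk
  ext i q
  simpa [blockRow] using congrFun (congrFun hzero i) (⟨k, hk⟩, q)

lemma isUnit_polyMoment_self {a : ℕ → Matrix ι ι R} {n : ℕ} (ha : IsMonicOrtho μ a n)
    (hμ : IsUnit (blockToeplitz μ (n + 1))) : IsUnit (polyMoment μ a n n) := by
  set H := polyMoment μ a n n
  set δ : ℕ → Matrix ι ι R := fun k => if k = n then 1 else 0
  set M := blockToeplitz μ (n + 1)
  have hrow : blockRow a (n + 1) * M = H * blockRow δ (n + 1) := by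
    rw [blockRow_mul_blockToeplitz, mul_blockRow]
    refine blockRow_congr fun j hj => ?_
    rcases (Nat.lt_succ_iff.mp hj).lt_or_eq with hjn | rfl
    · simpa [δ, hjn.ne, polyMoment] using ha.2 j hjn
    · simp [δ, H, polyMoment]
  have hsolve : blockRow a (n + 1) = H * (blockRow δ (n + 1) * M⁻¹) := by
    rw [← Matrix.mul_assoc, ← hrow,
      mul_nonsing_inv_cancel_right _ _ ((isUnit_iff_isUnit_det _).mp hμ)]
  set X : Matrix ι ι R := Matrix.of fun p q => (blockRow δ (n + 1) * M⁻¹) p (Fin.last n, q)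
  have hX : H * X = 1 := by
    ext i q
    simpa [blockRow, ha.1, mul_apply, X] using (congrFun (congrFun hsolve i) (Fin.last n, q)).symm
  exact (isUnit_iff_isUnit_det _).mpr (isUnit_det_of_right_inverse hX)

lemma eq_coeffShift_add_coeffRev {a a' d' : ℕ → Matrix ι ι R} {m : ℕ}
    (hμ : IsUnit (blockToeplitz μ m)) (ha : IsMonicOrtho μ a (m + 1))
    (ha' : IsMonicOrtho μ a' m) (hd' : IsMonicOrtho (reflect μ) d' m) :
    ∀ k ≤ m + 1, a k = coeffShift a' k + a 0 * coeffRev m d' k := by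
  set e : ℕ → Matrix ι ι R := fun k => a k - (coeffShift a' k + a 0 * coeffRev m d' k) with he
  have he0 : e 0 = 0 := by simp [e, coeffShift, coeffRev, hd'.1]
  have hem : e (m + 1) = 0 := by simp [e, coeffShift, coeffRev, ha.1, ha'.1]
  have hshift : e = coeffShift (fun l => e (l + 1)) :=
    funext fun k => by cases k <;> simp only [coeffShift, he0]
  have hmom : ∀ j < m, ∑ l ∈ range m, e (l + 1) * μ (j - l) = 0 := by
    intro j hj
    have ha_j : polyMoment μ a (m + 1) (j + 1) = 0 := mod_cast ha.2 (j + 1) (by omega)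
    have hd'_j : polyMoment (reflect μ) d' m (m - (j + 1)) = 0 := by
      simpa [Nat.cast_sub (show j + 1 ≤ m by omega)] using hd'.2 (m - (j + 1)) (by omega)
    have h : polyMoment μ e (m + 1) (j + 1) = 0 := by
      simp only [he, polyMoment_sub, polyMoment_add, polyMoment_const_mul, polyMoment_coeffShift,
        polyMoment_coeffRev, add_sub_cancel_right, ha_j, hd'_j, ha'.2 j hj]
      simp
    rwa [hshift, polyMoment_coeffShift, polyMoment, sum_range_succ, hem, Matrix.zero_mul, add_zero,
      add_sub_cancel_right] at h
  have hzero := eq_zero_of_sum_mul_eq_zero hμ hmom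
  intro k hk
  refine sub_eq_zero.mp (?_ : e k = 0)
  rcases k with _ | l
  · exact he0
  · rcases (Nat.succ_le_succ_iff.mp hk).lt_or_eq with hl | rfl
    · exact hzero l hl
    · exact hem

lemma polyMoment_succ {a a' d' : ℕ → Matrix ι ι R} {m : ℕ}
    (hμ : IsUnit (blockToeplitz μ m)) (ha : IsMonicOrtho μ a (m + 1))
    (ha' : IsMonicOrtho μ a' m) (hd' : IsMonicOrtho (reflect μ) d' m) (j : ℤ) :
    polyMoment μ a (m + 1) j =
      polyMoment μ a' m (j - 1) + a 0 * polyMoment (reflect μ) d' m (m - j) := by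
  rw [polyMoment_congr (eq_coeffShift_add_coeffRev hμ ha ha' hd'), polyMoment_add,
    polyMoment_const_mul, polyMoment_coeffShift, polyMoment_coeffRev]

lemma polyMoment_succ_self {a a' d d' : ℕ → Matrix ι ι R} {m : ℕ}
    (hμ : IsUnit (blockToeplitz μ m)) (hμ' : IsUnit (blockToeplitz (reflect μ) m))
    (ha : IsMonicOrtho μ a (m + 1)) (ha' : IsMonicOrtho μ a' m)
    (hd : IsMonicOrtho (reflect μ) d (m + 1)) (hd' : IsMonicOrtho (reflect μ) d' m) :
    polyMoment μ a (m + 1) ↑(m + 1) = (1 - a 0 * d 0) * polyMoment μ a' m m := by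
  have hA := polyMoment_succ hμ ha ha' hd' ↑(m + 1)
  have hD := polyMoment_succ hμ' hd hd' (by rwa [reflect_reflect]) 0
  have hd_0 : polyMoment (reflect μ) d (m + 1) 0 = 0 := mod_cast hd.2 0 m.succ_pos
  rw [reflect_reflect, hd_0] at hD
  push_cast at hA hD ⊢
  rw [sub_zero] at hD
  rw [hA, add_sub_cancel_right, sub_add_cancel_left, eq_neg_of_add_eq_zero_left hD.symm]
  noncomm_ring

theorem polyMoment_succ_mul_inv {a d : ℕ → ℕ → Matrix ι ι R}
    (hμ : ∀ n, IsUnit (blockToeplitz μ n)) (hμ' : ∀ n, IsUnit (blockToeplitz (reflect μ) n))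
    (ha : ∀ n, IsMonicOrtho μ (a n) n) (hd : ∀ n, IsMonicOrtho (reflect μ) (d n) n) (m : ℕ) :
    polyMoment μ (a (m + 1)) (m + 1) ↑(m + 1) * (polyMoment μ (a m) m m)⁻¹ =
        1 - a (m + 1) 0 * d (m + 1) 0 ∧
      IsUnit (1 - a (m + 1) 0 * d (m + 1) 0) := by
  have hunit := isUnit_polyMoment_self (ha m) (hμ (m + 1))
  have hratio : polyMoment μ (a (m + 1)) (m + 1) ↑(m + 1) * (polyMoment μ (a m) m m)⁻¹ =
      1 - a (m + 1) 0 * d (m + 1) 0 := by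
    rw [polyMoment_succ_self (hμ m) (hμ' m) (ha (m + 1)) (ha m) (hd (m + 1)) (hd m),
      mul_nonsing_inv_cancel_right _ _ ((isUnit_iff_isUnit_det _).mp hunit)]
  refine ⟨hratio, hratio ▸ ?_⟩
  exact (isUnit_polyMoment_self (ha (m + 1)) (hμ (m + 2))).mul (isUnit_nonsing_inv_iff.mpr hunit)

theorem polyMoment_reflect_succ_mul_inv {a d : ℕ → ℕ → Matrix ι ι R}
    (hμ : ∀ n, IsUnit (blockToeplitz μ n)) (hμ' : ∀ n, IsUnit (blockToeplitz (reflect μ) n))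
    (ha : ∀ n, IsMonicOrtho μ (a n) n) (hd : ∀ n, IsMonicOrtho (reflect μ) (d n) n) (m : ℕ) :
    polyMoment (reflect μ) (d (m + 1)) (m + 1) ↑(m + 1) * (polyMoment (reflect μ) (d m) m m)⁻¹ =
        1 - d (m + 1) 0 * a (m + 1) 0 ∧
      IsUnit (1 - d (m + 1) 0 * a (m + 1) 0) := by
  rw [← reflect_reflect μ] at hμ ha
  exact polyMoment_succ_mul_inv hμ' hμ hd ha m

end Matrix

end Szego

open Szego

section CircleIntegral

variable {N : ℕ}

lemma circInt_congr {f g : ℂ → Matrix (Fin N) (Fin N) ℂ}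
    (h : ∀ θ : ℝ, f (Complex.exp (θ * I)) = g (Complex.exp (θ * I))) :
    circInt N f = circInt N g := by
  ext i j
  simp only [circInt, of_apply, h]

lemma circInt_sum {κ : Type*} (s : Finset κ) (F : κ → ℂ → Matrix (Fin N) (Fin N) ℂ)
    (hF : ∀ k ∈ s, Continuous fun θ : ℝ => F k (Complex.exp (θ * I))) :
    circInt N (fun ζ => ∑ k ∈ s, F k ζ) = ∑ k ∈ s, circInt N (F k) := by
  ext i j
  simp only [circInt, of_apply, Matrix.sum_apply]
  rw [intervalIntegral.integral_finsetSum
    fun k hk => ((hF k hk).matrix_elem i j).intervalIntegrable _ _, Finset.smul_sum]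

lemma circInt_const_mul (A : Matrix (Fin N) (Fin N) ℂ) {f : ℂ → Matrix (Fin N) (Fin N) ℂ}
    (hf : Continuous fun θ : ℝ => f (Complex.exp (θ * I))) :
    circInt N (fun ζ => A * f ζ) = A * circInt N f := by
  ext i j
  simp only [circInt, of_apply, mul_apply]
  rw [intervalIntegral.integral_finsetSum
    fun l _ => ((hf.matrix_elem l j).intervalIntegrable _ _).const_mul (A i l)]
  simp only [intervalIntegral.integral_const_mul, Finset.smul_sum, mul_smul_comm]

lemma circInt_mul_const (A : Matrix (Fin N) (Fin N) ℂ) {f : ℂ → Matrix (Fin N) (Fin N) ℂ}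
    (hf : Continuous fun θ : ℝ => f (Complex.exp (θ * I))) :
    circInt N (fun ζ => f ζ * A) = circInt N f * A := by
  ext i j
  simp only [circInt, of_apply, mul_apply]
  rw [intervalIntegral.integral_finsetSum
    fun l _ => ((hf.matrix_elem i l).intervalIntegrable _ _).mul_const (A l j)]
  simp only [intervalIntegral.integral_mul_const, Finset.smul_sum, smul_mul_assoc]

variable {w : ℂ → Matrix (Fin N) (Fin N) ℂ}

lemma continuous_circle_zpow_smul (hw : Continuous w) (e : ℤ) :
    Continuous fun θ : ℝ => Complex.exp (θ * I) ^ e • w (Complex.exp (θ * I)) := by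
  have hexp : Continuous fun θ : ℝ => Complex.exp (θ * I) := by fun_prop
  exact (hexp.zpow₀ e fun θ => Or.inl (Complex.exp_ne_zero _)).smul (hw.comp hexp)

lemma star_exp_ofReal_mul_I (θ : ℝ) : star (Complex.exp (θ * I)) = (Complex.exp (θ * I))⁻¹ := by
  rw [Complex.star_def, ← Complex.exp_conj, ← Complex.exp_neg]
  simp

lemma circInt_zpow_smul_mPolyEval_mul (hw : Continuous w) (c : ℕ → Matrix (Fin N) (Fin N) ℂ)
    (n : ℕ) (j : ℤ) :
    circInt N (fun ζ => ζ ^ (-j) • (mPolyEval c n ζ * w ζ)) = polyMoment (mMoment N w) c n j := by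
  calc circInt N (fun ζ => ζ ^ (-j) • (mPolyEval c n ζ * w ζ))
      = circInt N (fun ζ => ∑ k ∈ Finset.range (n + 1), c k * (ζ ^ (-(j - k)) • w ζ)) := by
        refine circInt_congr fun θ => ?_
        simp only [mPolyEval, Finset.sum_mul, Finset.smul_sum, smul_mul_assoc, mul_smul_comm,
          smul_smul, ← zpow_natCast, ← zpow_add₀ (Complex.exp_ne_zero _)]
        ring_nf
    _ = polyMoment (mMoment N w) c n j :=
        (circInt_sum _ _ fun k _ =>
          continuous_const.mul (continuous_circle_zpow_smul hw _)).trans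
        (Finset.sum_congr rfl fun k _ => circInt_const_mul _ (continuous_circle_zpow_smul hw _))

lemma circInt_zpow_smul_mul_mPolyEval (hw : Continuous w) (c : ℕ → Matrix (Fin N) (Fin N) ℂ)
    (n : ℕ) (j : ℤ) :
    circInt N (fun ζ => ζ ^ (-j) • (w ζ * mPolyEval c n ζ)) =
      ∑ k ∈ Finset.range (n + 1), mMoment N w (j - k) * c k := by
  calc circInt N (fun ζ => ζ ^ (-j) • (w ζ * mPolyEval c n ζ))
      = circInt N (fun ζ => ∑ k ∈ Finset.range (n + 1), (ζ ^ (-(j - k)) • w ζ) * c k) := by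
        refine circInt_congr fun θ => ?_
        simp only [mPolyEval, Finset.mul_sum, Finset.smul_sum, smul_mul_assoc, mul_smul_comm,
          smul_smul, ← zpow_natCast, ← zpow_add₀ (Complex.exp_ne_zero _)]
        ring_nf
    _ = ∑ k ∈ Finset.range (n + 1), mMoment N w (j - k) * c k :=
        (circInt_sum _ _ fun k _ =>
          (continuous_circle_zpow_smul hw _).mul continuous_const).trans
        (Finset.sum_congr rfl fun k _ => circInt_mul_const _ (continuous_circle_zpow_smul hw _))

lemma circInt_pow_smul_conjTranspose_mPolyEval_mul (hw : Continuous w)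
    (c : ℕ → Matrix (Fin N) (Fin N) ℂ) (n j : ℕ) :
    circInt N (fun ζ => ζ ^ j • ((mPolyEval c n ζ)ᴴ * w ζ)) =
      polyMoment (reflect (mMoment N w)) (fun k => (c k)ᴴ) n j := by
  calc circInt N (fun ζ => ζ ^ j • ((mPolyEval c n ζ)ᴴ * w ζ))
      = circInt N (fun ζ => ∑ k ∈ Finset.range (n + 1),
          (c k)ᴴ * (ζ ^ (-(-((j : ℤ) - k))) • w ζ)) := by
        refine circInt_congr fun θ => ?_
        simp only [mPolyEval, conjTranspose_sum, conjTranspose_smul, star_pow,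
          star_exp_ofReal_mul_I, Finset.sum_mul, Finset.smul_sum, smul_mul_assoc, mul_smul_comm,
          smul_smul]
        refine Finset.sum_congr rfl fun k _ => ?_
        rw [← zpow_natCast, ← zpow_natCast, _root_.inv_zpow', ← zpow_add₀ (Complex.exp_ne_zero _)]
        ring_nf
    _ = polyMoment (reflect (mMoment N w)) (fun k => (c k)ᴴ) n j :=
        (circInt_sum _ _ fun k _ =>
          continuous_const.mul (continuous_circle_zpow_smul hw _)).trans
        (Finset.sum_congr rfl fun k _ => circInt_const_mul _ (continuous_circle_zpow_smul hw _))

lemma IsSzPL1.isMonicOrtho {P : ℕ → ℕ → Matrix (Fin N) (Fin N) ℂ} (hP : IsSzPL1 N w P)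
    (hw : Continuous w) (n : ℕ) : IsMonicOrtho (mMoment N w) (P n) n :=
  ⟨(hP n).1, fun j hj => by
    simpa only [circInt_zpow_smul_mPolyEval_mul hw] using (hP n).2.2 j hj⟩

lemma IsSzPR2.isMonicOrtho_reflect {P : ℕ → ℕ → Matrix (Fin N) (Fin N) ℂ} (hP : IsSzPR2 N w P)
    (hw : Continuous w) (n : ℕ) : IsMonicOrtho (reflect (mMoment N w)) (fun k => (P n k)ᴴ) n :=
  ⟨by simp [(hP n).1], fun j hj => by
    simpa only [circInt_pow_smul_conjTranspose_mPolyEval_mul hw] using (hP n).2.2 j hj⟩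

lemma szHL_eq_polyMoment (hw : Continuous w) (P : ℕ → ℕ → Matrix (Fin N) (Fin N) ℂ) (n : ℕ) :
    szHL N w P n = polyMoment (mMoment N w) (P n) n n :=
  circInt_zpow_smul_mPolyEval_mul hw _ _ _

lemma szHR_eq_polyMoment {PR1 PR2 : ℕ → ℕ → Matrix (Fin N) (Fin N) ℂ} (hw : Continuous w)
    (hPR1 : IsSzPR1 N w PR1) (hPR2 : IsSzPR2 N w PR2) (n : ℕ) :
    szHR N w PR1 n = polyMoment (reflect (mMoment N w)) (fun k => (PR2 n k)ᴴ) n n := by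
  rw [szHR, circInt_zpow_smul_mul_mPolyEval hw]
  refine sum_moment_mul_eq_polyMoment_reflect (hPR1 n).1 (fun j hj => ?_)
    (hPR2.isMonicOrtho_reflect hw n)
  rw [← circInt_zpow_smul_mul_mPolyEval hw]
  exact (hPR1 n).2.2 j hj

lemma QuasiDef.isUnit_blockToeplitz (h : QuasiDef N w) (n : ℕ) :
    IsUnit (blockToeplitz (mMoment N w) n) := by
  rcases n with _ | n
  · exact isUnit_of_subsingleton _
  · exact (h (n + 1) n.succ_pos).2

lemma QuasiDef.isUnit_blockToeplitz_reflect (h : QuasiDef N w) (n : ℕ) :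
    IsUnit (blockToeplitz (reflect (mMoment N w)) n) := by
  rcases n with _ | n
  · exact isUnit_of_subsingleton _
  · simpa only [blockToeplitz, reflect, neg_sub] using (h (n + 1) n.succ_pos).1

lemma szVer_eq (P : ℕ → ℕ → Matrix (Fin N) (Fin N) ℂ) (n : ℕ) : szVer P n = P n 0 := by
  simp [szVer, mPolyEval, Finset.sum_range_succ']

end CircleIntegral

theorem statement7_general {N : ℕ} (w : ℂ → Matrix (Fin N) (Fin N) ℂ)
    (hw : Continuous w) (hqd : QuasiDef N w)
    (PL1 PR1 PR2 : ℕ → ℕ → Matrix (Fin N) (Fin N) ℂ)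
    (hPL1 : IsSzPL1 N w PL1) (hPR1 : IsSzPR1 N w PR1) (hPR2 : IsSzPR2 N w PR2) :
    ∀ n : ℕ, 1 ≤ n →
      szHR N w PR1 n * (szHR N w PR1 (n - 1))⁻¹ = 1 - (szVer PR2 n)ᴴ * szVer PL1 n ∧
      szHL N w PL1 n * (szHL N w PL1 (n - 1))⁻¹ = 1 - szVer PL1 n * (szVer PR2 n)ᴴ ∧
      IsUnit (1 - (szVer PR2 n)ᴴ * szVer PL1 n) ∧
      IsUnit (1 - szVer PL1 n * (szVer PR2 n)ᴴ) := by
  intro n hn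
  obtain ⟨m, rfl⟩ : ∃ m, n = m + 1 := ⟨n - 1, by omega⟩
  have hL := hPL1.isMonicOrtho hw
  have hR := hPR2.isMonicOrtho_reflect hw
  have hToep := hqd.isUnit_blockToeplitz
  have hToep' := hqd.isUnit_blockToeplitz_reflect
  obtain ⟨hratioR, hunitR⟩ := polyMoment_reflect_succ_mul_inv hToep hToep' hL hR m
  obtain ⟨hratioL, hunitL⟩ := polyMoment_succ_mul_inv hToep hToep' hL hR m
  simp only [Nat.add_sub_cancel, szVer_eq, szHL_eq_polyMoment hw, szHR_eq_polyMoment hw hPR1 hPR2]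
  exact ⟨hratioR, hratioL, hunitR, hunitL⟩

/-- ratios of consecutive quasi-tau matrices in terms of Verblunsky
matrices, and the resulting invertibility. -/
theorem statement7 {N : ℕ} (hN : 1 ≤ N) (w : ℂ → Matrix (Fin N) (Fin N) ℂ)
    (hw : Continuous w) (hqd : QuasiDef N w)
    (PL1 PR1 PR2 : ℕ → ℕ → Matrix (Fin N) (Fin N) ℂ)
    (hPL1 : IsSzPL1 N w PL1) (hPR1 : IsSzPR1 N w PR1) (hPR2 : IsSzPR2 N w PR2) :
    ∀ n : ℕ, 1 ≤ n →
      szHR N w PR1 n * (szHR N w PR1 (n - 1))⁻¹ = 1 - (szVer PR2 n)ᴴ * szVer PL1 n ∧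
      szHL N w PL1 n * (szHL N w PL1 (n - 1))⁻¹ = 1 - szVer PL1 n * (szVer PR2 n)ᴴ ∧
      IsUnit (1 - (szVer PR2 n)ᴴ * szVer PL1 n) ∧
      IsUnit (1 - szVer PL1 n * (szVer PR2 n)ᴴ) :=
  statement7_general w hw hqd PL1 PR1 PR2 hPL1 hPR1 hPR2
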